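/- arXiv:1307.4819 — 3 statements merged into one kernel-verified Lean document; each statement's English description precedes it below -/
import Mathlib

section
/- Let C₊, C₋ be cochain complexes over K with a chain-level pairing ⟨·,·⟩ : C₊ ⊗ C₋ → K compatible with differentials (⟨dx, ξ⟩ + (−1)^{|x|}⟨x, dξ⟩ = 0), a chain-level product ⌣ and a degree −1 operation ∗ on C₋ satisfying d(ξ₀ ∗ ξ₁) = dξ₀ ∗ ξ₁ + (−1)^{|ξ₀|} ξ₀ ∗ dξ₁ + ξ₀ ⌣ ξ₁ − (−1)^{|ξ₀||ξ₁|} ξ₁ ⌣ ξ₀ (up to overall sign convention), and a cocycle β with ⟨β ⌣ ξ₀, ξ₁⟩ = ⟨β, ξ₀ ⌣ ξ₁⟩-type cyclic symmetry. Then the pairing ι((ξ₀,x₀),(ξ₁,x₁)) = ⟨x₀, ξ₁⟩ − (−1)^{|ξ₀|}⟨x₁, ξ₀⟩ + ⟨β, ξ₀ ∗ ξ₁⟩ on C̃ = C₋ ⊕ C₊ (with differential d̃(ξ,x) = (dξ, dx − β⌣ξ)) is a chain map, i.e., ι(d̃(ξ₀,x₀),(ξ₁,x₁)) + (−1)^{|ξ₀|}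 ι((ξ₀,x₀), d̃(ξ₁,x₁)) = 0. -/
/-!
The terms pairing `x₀, x₁` against `ξ₀, ξ₁` cancel by compatibility of the pairing with the
differentials (using `s₀² = 1`). By cyclic symmetry the remaining terms only involve `β`, and the
Leibniz rule for `∗` recombines them into `⟨β, d(ξ₀ ∗ ξ₁)⟩`, which vanishes because `β` is closed.
-/

theorem pair_star_dA_add_eq_pair_cup_sub {K A B : Type*} [CommRing K]
    [AddCommGroup A] [Module K A] [AddCommGroup B] [Module K B]
    (dA : A →ₗ[K] A) (pair : B →ₗ[K] A →ₗ[K] K) (cupAA star : A →ₗ[K] A →ₗ[K] A)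
    (β : B) (s₀ : K) (ξ₀ ξ₁ : A)
    (hβ : pair β (dA (star ξ₀ ξ₁)) = 0)
    (hLeib : dA (star ξ₀ ξ₁)
      = - star (dA ξ₀) ξ₁ - s₀ • star ξ₀ (dA ξ₁) + cupAA ξ₀ ξ₁ - cupAA ξ₁ ξ₀) :
    pair β (star (dA ξ₀) ξ₁) + s₀ * pair β (star ξ₀ (dA ξ₁))
      = pair β (cupAA ξ₀ ξ₁) - pair β (cupAA ξ₁ ξ₀) := by
  rw [hLeib] at hβ
  simp only [map_sub, map_add, map_neg, map_smul, smul_eq_mul] at hβ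
  linear_combination -hβ

/-- Chain-map property of the cone pairing
`ι((ξ₀,x₀),(ξ₁,x₁)) = ⟨x₀,ξ₁⟩ − (−1)^{|ξ₀|}⟨x₁,ξ₀⟩ + ⟨β, ξ₀ ∗ ξ₁⟩`
on `C̃ = C₋ ⊕ C₊` with `d̃(ξ,x) = (dξ, dx − β⌣ξ)`:
`ι(d̃(ξ₀,x₀),(ξ₁,x₁)) + (−1)^{|ξ₀|} ι((ξ₀,x₀), d̃(ξ₁,x₁)) = 0`.
Here `A` plays the role of `C₋`, `B` of `C₊`; the Koszul signs
`s₀ = (−1)^{|ξ₀|}`, `s₁ = (−1)^{|ξ₁|}` (with `|ξ₀| + |ξ₁| = 2n − 1` odd, so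
`s₁ = −s₀`) are carried as scalars. -/
theorem cone_pairing_is_chain_map
    {K A B : Type*} [Field K]
    [AddCommGroup A] [Module K A] [AddCommGroup B] [Module K B]
    (dA : A →ₗ[K] A) (dB : B →ₗ[K] B)
    (pair : B →ₗ[K] A →ₗ[K] K)
    (cupBA : B →ₗ[K] A →ₗ[K] B)   -- (β, ξ) ↦ β ⌣ ξ ∈ C₊
    (cupAA : A →ₗ[K] A →ₗ[K] A)   -- (ξ, ξ') ↦ ξ ⌣ ξ' ∈ C₋
    (star : A →ₗ[K] A →ₗ[K] A)    -- the secondary product ∗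
    (β : B) (s₀ s₁ : K) (ξ₀ ξ₁ : A) (x₀ x₁ : B)
    (hs₀ : s₀ * s₀ = 1) (hs₁ : s₁ = - s₀)
    -- compatibility of the pairing with the differentials
    (hpair₀ : pair (dB x₀) ξ₁ + s₀ * pair x₀ (dA ξ₁) = 0)
    (hpair₁ : pair (dB x₁) ξ₀ + s₁ * pair x₁ (dA ξ₀) = 0)
    -- β is a cocycle: pairing it against any coboundary vanishes
    (hβclosed : ∀ ζ : A, pair β (dA ζ) = 0)
    -- cyclic symmetry ⟨β ⌣ ξ, ξ'⟩ = ⟨β, ξ ⌣ ξ'⟩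
    (hcyc : ∀ ξ ξ' : A, pair (cupBA β ξ) ξ' = pair β (cupAA ξ ξ'))
    -- homotopy-commutativity (Leibniz) relation for ∗
    (hLeib : dA (star ξ₀ ξ₁)
      = - star (dA ξ₀) ξ₁ - s₀ • star ξ₀ (dA ξ₁)
        + cupAA ξ₀ ξ₁ - cupAA ξ₁ ξ₀) :
    (pair (dB x₀ - cupBA β ξ₀) ξ₁ - (- s₀) * pair x₁ (dA ξ₀)
        + pair β (star (dA ξ₀) ξ₁))
      + s₀ * (pair x₀ (dA ξ₁) - s₀ * pair (dB x₁ - cupBA β ξ₁) ξ₀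
        + pair β (star ξ₀ (dA ξ₁))) = 0 := by
  have hstar := pair_star_dA_add_eq_pair_cup_sub dA pair cupAA star β s₀ ξ₀ ξ₁
    (hβclosed _) hLeib
  rw [hs₁] at hpair₁
  simp only [map_sub, LinearMap.sub_apply, hcyc]
  linear_combination hpair₀ - hpair₁ + hstar
    + (pair β (cupAA ξ₁ ξ₀) - pair (dB x₁) ξ₀) * hs₀
end

section
/- With the pairing ι from the twisted complex as above, for any cocycles (ξ₀,x₀), (ξ₁,x₁) ∈ C̃ the symmetrization satisfies ι((ξ₀,x₀),(ξ₁,x₁)) + (−1)^{|ξ₀|} ι((ξ₁,x₁),(ξ₀,x₀)) = ⟨β, [ξ₀, ξ₁]⟩, where [ξ₀,ξ₁] := ξ₀ ∗ ξ₁ + (−1)^{|ξ₀||ξ₁|} ξ₁ ∗ ξ₀. -/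
theorem sub_add_add_mul_sub_add_of_mul_self_eq_one {R : Type*} [CommRing R] {s : R}
    (hs : s * s = 1) (a b c d : R) :
    (a - s * b + c) + s * (b - s * a + d) = c + s * d := by
  linear_combination -a * hs

-- As `|ξ₀| + |ξ₁|` is even, the Koszul sign `(−1)^{|ξ₀||ξ₁|}` of the bracket equals `s₀ = (−1)^{|ξ₀|}`.
/-- Symmetrization of the cone pairing: for cocycles `(ξ₀,x₀)`, `(ξ₁,x₁)` with
`ι((ξ₀,x₀),(ξ₁,x₁)) = ⟨x₀,ξ₁⟩ − (−1)^{|ξ₀|}⟨x₁,ξ₀⟩ + ⟨β, ξ₀ ∗ ξ₁⟩`, one has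
`ι((ξ₀,x₀),(ξ₁,x₁)) + (−1)^{|ξ₀|} ι((ξ₁,x₁),(ξ₀,x₀)) = ⟨β, [ξ₀,ξ₁]⟩`, where
`[ξ₀,ξ₁] = ξ₀ ∗ ξ₁ + (−1)^{|ξ₀||ξ₁|} ξ₁ ∗ ξ₀`.  Since `|ξ₀| + |ξ₁| = 2n`,
the relevant Koszul signs are all `s₀ = (−1)^{|ξ₀|}`. -/
theorem cone_pairing_symmetrization
    {K A B : Type*} [Field K]
    [AddCommGroup A] [Module K A] [AddCommGroup B] [Module K B]
    (pair : B →ₗ[K] A →ₗ[K] K)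
    (star : A →ₗ[K] A →ₗ[K] A)
    (β : B) (s₀ : K) (hs₀ : s₀ * s₀ = 1)
    (ξ₀ ξ₁ : A) (x₀ x₁ : B) :
    (pair x₀ ξ₁ - s₀ * pair x₁ ξ₀ + pair β (star ξ₀ ξ₁))
      + s₀ * (pair x₁ ξ₀ - s₀ * pair x₀ ξ₁ + pair β (star ξ₁ ξ₀))
      = pair β (star ξ₀ ξ₁ + s₀ • star ξ₁ ξ₀) := by
  rw [sub_add_add_mul_sub_add_of_mul_self_eq_one hs₀, map_add, map_smul, smul_eq_mul]
end

section
/- Nondegeneracy of the cone pairing: Let C̃ fit in a long exact sequence ⋯ → H₊^{k} → H̃^k →^p H₋^k →^{−B} H₊^{k+1} → ⋯ where H₊^k and H₋^{2n−k} are finite-dimensional and dually paired by ⟨·,·⟩, and the two multiplication maps B : H₋^k → H₊^{k+1} and B : H₋^{2n−k−1} → H₊^{2n−k} are mutually dual up to sign. Suppose I : H̃^k ⊗ H̃^{2n−k} → K is a bilinear pairing such that whenever x̃₁ is the image of x₁ ∈ H₊ and x̃₀ has image ξ₀ ∈ H₋, then I(x̃₀, x̃₁) = −⟨ξ₀, x₁⟩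 (and symmetrically). Then I is nondegenerate. -/
/-! If `x̃₀` pairs trivially with everything, pairing against the images of `H₊` shows that its
image in `H₋` vanishes, so `x̃₀` comes from some `x₀ ∈ H₊`. Pairing against the elements of
`H̃` whose image lies in `ker B` then shows that `x₀` is annihilated by `ker B`, which by duality
of the two `B`-maps contains the annihilator of `im B`; hence `x₀ ∈ im B` and `x̃₀ = 0` by exactness.
The other side is the same argument with the roles of the two sequences exchanged. -/

theorem Submodule.mem_of_forall_pairing_eq_zero {K V W : Type*} [Field K]
    [AddCommGroup V] [Module K V] [AddCommGroup W] [Module K W] [FiniteDimensional K W]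
    (p : V →ₗ[K] W →ₗ[K] K) (hp : ∀ w, (∀ v, p v w = 0) → w = 0)
    (T : Submodule K W) (w : W) (hw : ∀ v, (∀ t ∈ T, p v t = 0) → p v w = 0) : w ∈ T := by
  have hsurj : Function.Surjective p :=
    LinearMap.flip_injective_iff₂.mp fun w₁ w₂ h ↦
      sub_eq_zero.mp <| hp _ fun v ↦ by simpa [sub_eq_zero] using LinearMap.congr_fun h v
  refine (Subspace.forall_mem_dualAnnihilator_apply_eq_zero_iff T w).mp fun φ hφ ↦ ?_
  obtain ⟨v, rfl⟩ := hsurj φ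
  exact hw v fun t ht ↦ (Submodule.mem_dualAnnihilator _).mp hφ t ht

theorem mem_range_of_forall_mem_ker_pairing_eq_zero {K E A N F : Type*} [Field K]
    [AddCommGroup E] [Module K E] [AddCommGroup A] [Module K A] [FiniteDimensional K A]
    [AddCommGroup N] [Module K N] [AddCommGroup F] [Module K F]
    (b : E →ₗ[K] A) (c : N →ₗ[K] F) (pNA : N →ₗ[K] A →ₗ[K] K) (pEF : E →ₗ[K] F →ₗ[K] K)
    (hNA : ∀ x, (∀ ξ, pNA ξ x = 0) → x = 0) (hEF : ∀ y, (∀ η, pEF η y = 0) → y = 0)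
    (hadj : ∀ ξ η, pNA ξ (b η) = 0 → pEF η (c ξ) = 0)
    (x : A) (hx : ∀ ξ, c ξ = 0 → pNA ξ x = 0) : x ∈ LinearMap.range b :=
  Submodule.mem_of_forall_pairing_eq_zero pNA hNA _ x fun ξ hξ ↦
    hx ξ <| hEF _ fun η ↦ hadj ξ η <| hξ _ ⟨η, rfl⟩

theorem eq_zero_of_forall_cone_pairing_eq_zero {K E A T M P S N F : Type*} [Field K]
    [AddCommGroup E] [Module K E] [AddCommGroup A] [Module K A] [FiniteDimensional K A]
    [AddCommGroup T] [Module K T] [AddCommGroup M] [Module K M]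
    [AddCommGroup P] [Module K P] [AddCommGroup S] [Module K S]
    [AddCommGroup N] [Module K N] [AddCommGroup F] [Module K F]
    (b : E →ₗ[K] A) (i : A →ₗ[K] T) (q : T →ₗ[K] M)
    (j : P →ₗ[K] S) (r : S →ₗ[K] N) (c : N →ₗ[K] F)
    (hbi : Function.Exact b i) (hiq : Function.Exact i q) (hrc : Function.Exact r c)
    (pMP : M →ₗ[K] P →ₗ[K] K) (pNA : N →ₗ[K] A →ₗ[K] K) (pEF : E →ₗ[K] F →ₗ[K] K)
    (hMP : ∀ ξ, (∀ x, pMP ξ x = 0) → ξ = 0) (hNA : ∀ x, (∀ ξ, pNA ξ x = 0) → x = 0)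
    (hEF : ∀ y, (∀ η, pEF η y = 0) → y = 0)
    (hadj : ∀ ξ η, pNA ξ (b η) = 0 → pEF η (c ξ) = 0)
    (I : T →ₗ[K] S →ₗ[K] K)
    (hIj : ∀ x₀ x₁, I x₀ (j x₁) = - pMP (q x₀) x₁)
    (hIi : ∀ x₀ x₁, I (i x₀) x₁ = - pNA (r x₁) x₀)
    (x₀ : T) (hx₀ : ∀ x₁, I x₀ x₁ = 0) : x₀ = 0 := by
  have hq : q x₀ = 0 := hMP _ fun x₁ ↦ by simpa [hx₀] using hIj x₀ x₁
  obtain ⟨y₀, rfl⟩ := (hiq x₀).mp hq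
  have hy₀ : y₀ ∈ LinearMap.range b :=
    mem_range_of_forall_mem_ker_pairing_eq_zero b c pNA pEF hNA hEF hadj y₀ fun ξ hξ ↦ by
      obtain ⟨x₁, rfl⟩ := (hrc ξ).mp hξ
      simpa [hx₀] using hIi y₀ x₁
  exact (hbi _).mpr hy₀
/-- The spaces are `E = H₋^{k−1}`, `Ap = H₊^k`, `At = H̃^k`, `Am = H₋^k`, `Bp = H₊^{k+1}`,
`Dm = H₋^{2n−k−1}`, `Cp = H₊^{2n−k}`, `Ct = H̃^{2n−k}`, `Cm = H₋^{2n−k}`, `F = H₊^{2n−k+1}`;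
`b0, b1, b2, b3` are the `B`-maps and `i, q` the maps of the two long exact sequences. -/
theorem cone_pairing_nondegenerate_general
    {K E Ap At Am Bp Dm Cp Ct Cm F : Type*} [Field K]
    [AddCommGroup E] [Module K E]
    [AddCommGroup Ap] [Module K Ap] [FiniteDimensional K Ap]
    [AddCommGroup At] [Module K At]
    [AddCommGroup Am] [Module K Am]
    [AddCommGroup Bp] [Module K Bp]
    [AddCommGroup Dm] [Module K Dm]
    [AddCommGroup Cp] [Module K Cp] [FiniteDimensional K Cp]
    [AddCommGroup Ct] [Module K Ct]
    [AddCommGroup Cm] [Module K Cm]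
    [AddCommGroup F] [Module K F]
    -- structure maps of the two long exact sequences
    (b0 : E →ₗ[K] Ap) (i1 : Ap →ₗ[K] At) (q1 : At →ₗ[K] Am) (b1 : Am →ₗ[K] Bp)
    (b3 : Dm →ₗ[K] Cp) (i2 : Cp →ₗ[K] Ct) (q2 : Ct →ₗ[K] Cm) (b2 : Cm →ₗ[K] F)
    (hex1 : Function.Exact b0 i1) (hex2 : Function.Exact i1 q1)
    (hex3 : Function.Exact q1 b1)
    (hex4 : Function.Exact b3 i2) (hex5 : Function.Exact i2 q2)
    (hex6 : Function.Exact q2 b2)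
    -- the four nondegenerate duality pairings
    (pAC : Am →ₗ[K] Cp →ₗ[K] K) (pCA : Cm →ₗ[K] Ap →ₗ[K] K)
    (pEF : E →ₗ[K] F →ₗ[K] K) (pDB : Dm →ₗ[K] Bp →ₗ[K] K)
    (hAC₁ : ∀ ξ, (∀ x, pAC ξ x = 0) → ξ = 0)
    (hAC₂ : ∀ x, (∀ ξ, pAC ξ x = 0) → x = 0)
    (hCA₁ : ∀ ξ, (∀ x, pCA ξ x = 0) → ξ = 0)
    (hCA₂ : ∀ x, (∀ ξ, pCA ξ x = 0) → x = 0)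
    (hEF₂ : ∀ y, (∀ η, pEF η y = 0) → y = 0)
    (hDB₂ : ∀ y, (∀ η, pDB η y = 0) → y = 0)
    -- the multiplication maps are mutually dual, up to sign
    (s s' : K) (hs : s = 1 ∨ s = -1)
    (hdual1 : ∀ (ξ : Cm) (η : E), pCA ξ (b0 η) = s * pEF η (b2 ξ))
    (hdual2 : ∀ (η : Dm) (ξ : Am), pDB η (b1 ξ) = s' * pAC ξ (b3 η))
    -- the pairing I and its behaviour on lifts (Lemma 3.1)
    (I : At →ₗ[K] Ct →ₗ[K] K)
    (hI1 : ∀ (x₀ : At) (x₁ : Cp), I x₀ (i2 x₁) = - pAC (q1 x₀) x₁)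
    (hI2 : ∀ (x₀ : Ap) (x₁ : Ct), I (i1 x₀) x₁ = - pCA (q2 x₁) x₀) :
    (∀ x₀ : At, (∀ x₁ : Ct, I x₀ x₁ = 0) → x₀ = 0) ∧
    (∀ x₁ : Ct, (∀ x₀ : At, I x₀ x₁ = 0) → x₁ = 0) := by
  have hs0 : s ≠ 0 := by rcases hs with rfl | rfl <;> norm_num
  exact ⟨eq_zero_of_forall_cone_pairing_eq_zero b0 i1 q1 i2 q2 b2 hex1 hex2 hex6 pAC pCA pEF
      hAC₁ hCA₂ hEF₂ (fun ξ η h ↦ by simpa [hdual1, hs0] using h) I hI1 hI2,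
    eq_zero_of_forall_cone_pairing_eq_zero b3 i2 q2 i1 q1 b1 hex4 hex5 hex3 pCA pAC pDB
      hCA₁ hAC₂ hDB₂ (fun ξ η h ↦ by simp [hdual2, h]) I.flip
      (fun x₁ x₀ ↦ hI2 x₀ x₁) (fun x₁ x₀ ↦ hI1 x₀ x₁)⟩

/-- Nondegeneracy of the cone pairing (Corollary 3.2 of the paper), in abstract
linear-algebra form.  The spaces are:
`E = H₋^{k−1}`, `Ap = H₊^k`, `At = H̃^k`, `Am = H₋^k`, `Bp = H₊^{k+1}`,
`Dm = H₋^{2n−k−1}`, `Cp = H₊^{2n−k}`, `Ct = H̃^{2n−k}`, `Cm = H₋^{2n−k}`,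
`F = H₊^{2n−k+1}`; `b0, b1, b2, b3` are the multiplication-by-`B` maps,
`i, q` the maps of the two long exact sequences, and the four pairings are the
duality pairings `⟨·,·⟩`, with `b0` dual to `b2` and `b1` dual to `b3` up to
sign.  If `I` restricts as prescribed by Lemma 3.1, then `I` is nondegenerate. -/
theorem cone_pairing_nondegenerate
    {K E Ap At Am Bp Dm Cp Ct Cm F : Type*} [Field K]
    [AddCommGroup E] [Module K E] [FiniteDimensional K E]
    [AddCommGroup Ap] [Module K Ap] [FiniteDimensional K Ap]
    [AddCommGroup At] [Module K At] [FiniteDimensional K At]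
    [AddCommGroup Am] [Module K Am] [FiniteDimensional K Am]
    [AddCommGroup Bp] [Module K Bp] [FiniteDimensional K Bp]
    [AddCommGroup Dm] [Module K Dm] [FiniteDimensional K Dm]
    [AddCommGroup Cp] [Module K Cp] [FiniteDimensional K Cp]
    [AddCommGroup Ct] [Module K Ct] [FiniteDimensional K Ct]
    [AddCommGroup Cm] [Module K Cm] [FiniteDimensional K Cm]
    [AddCommGroup F] [Module K F] [FiniteDimensional K F]
    -- structure maps of the two long exact sequences
    (b0 : E →ₗ[K] Ap) (i1 : Ap →ₗ[K] At) (q1 : At →ₗ[K] Am) (b1 : Am →ₗ[K] Bp)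
    (b3 : Dm →ₗ[K] Cp) (i2 : Cp →ₗ[K] Ct) (q2 : Ct →ₗ[K] Cm) (b2 : Cm →ₗ[K] F)
    (hex1 : Function.Exact b0 i1) (hex2 : Function.Exact i1 q1)
    (hex3 : Function.Exact q1 b1)
    (hex4 : Function.Exact b3 i2) (hex5 : Function.Exact i2 q2)
    (hex6 : Function.Exact q2 b2)
    -- the four nondegenerate duality pairings
    (pAC : Am →ₗ[K] Cp →ₗ[K] K) (pCA : Cm →ₗ[K] Ap →ₗ[K] K)
    (pEF : E →ₗ[K] F →ₗ[K] K) (pDB : Dm →ₗ[K] Bp →ₗ[K] K)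
    (hAC₁ : ∀ ξ, (∀ x, pAC ξ x = 0) → ξ = 0)
    (hAC₂ : ∀ x, (∀ ξ, pAC ξ x = 0) → x = 0)
    (hCA₁ : ∀ ξ, (∀ x, pCA ξ x = 0) → ξ = 0)
    (hCA₂ : ∀ x, (∀ ξ, pCA ξ x = 0) → x = 0)
    (hEF₁ : ∀ η, (∀ y, pEF η y = 0) → η = 0)
    (hEF₂ : ∀ y, (∀ η, pEF η y = 0) → y = 0)
    (hDB₁ : ∀ η, (∀ y, pDB η y = 0) → η = 0)
    (hDB₂ : ∀ y, (∀ η, pDB η y = 0) → y = 0)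
    -- the multiplication maps are mutually dual, up to sign
    (s s' : K) (hs : s = 1 ∨ s = -1) (hs' : s' = 1 ∨ s' = -1)
    (hdual1 : ∀ (ξ : Cm) (η : E), pCA ξ (b0 η) = s * pEF η (b2 ξ))
    (hdual2 : ∀ (η : Dm) (ξ : Am), pDB η (b1 ξ) = s' * pAC ξ (b3 η))
    -- the pairing I and its behaviour on lifts (Lemma 3.1)
    (I : At →ₗ[K] Ct →ₗ[K] K)
    (hI1 : ∀ (x₀ : At) (x₁ : Cp), I x₀ (i2 x₁) = - pAC (q1 x₀) x₁)
    (hI2 : ∀ (x₀ : Ap) (x₁ : Ct), I (i1 x₀) x₁ = - pCA (q2 x₁) x₀) :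
    (∀ x₀ : At, (∀ x₁ : Ct, I x₀ x₁ = 0) → x₀ = 0) ∧
    (∀ x₁ : Ct, (∀ x₀ : At, I x₀ x₁ = 0) → x₁ = 0) :=
  cone_pairing_nondegenerate_general b0 i1 q1 b1 b3 i2 q2 b2 hex1 hex2 hex3 hex4 hex5 hex6 pAC pCA
    pEF pDB hAC₁ hAC₂ hCA₁ hCA₂ hEF₂ hDB₂ s s' hs hdual1 hdual2 I hI1 hI2
end
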